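/- arXiv:2602.08618 — 2 statements merged into one kernel-verified Lean document; each statement's English description precedes it below -/
import Mathlib

section
/- Let L > 0, let f : ℝ^n → ℝ be L-smooth convex, and let (x_k) be the gradient descent sequence with initial point x₀ and constant step sizes η_i = 1/L. Assume p⋆ ∈ dom f* (i.e., dom f* has a minimum-norm point). Then for every k ≥ 1, ‖∇f(x_k) − p⋆‖² ≤ ‖∇f(x_k)‖² − ‖p⋆‖² ≤ 2L·D_f(x₀, p⋆)/k. -/
open scoped InnerProductSpace
open Filter Topology

/-- Legendre–Fenchel conjugate of `f`, valued in `ℝ ∪ {∞}` (modeled in `EReal`). -/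
noncomputable def fconj {n : ℕ} (f : EuclideanSpace ℝ (Fin n) → ℝ)
    (p : EuclideanSpace ℝ (Fin n)) : EReal :=
  ⨆ x : EuclideanSpace ℝ (Fin n), ((⟪p, x⟫_ℝ - f x : ℝ) : EReal)

/-- Effective domain `dom f*` of the Legendre–Fenchel conjugate. -/
noncomputable def fconjDom {n : ℕ} (f : EuclideanSpace ℝ (Fin n) → ℝ) :
    Set (EuclideanSpace ℝ (Fin n)) := {p | fconj f p < ⊤}

/-- Dual divergence `D_f(x, p) = f x + f*(p) − ⟨p, x⟩` (meaningful for `p ∈ dom f*`). -/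
noncomputable def dualDiv {n : ℕ} (f : EuclideanSpace ℝ (Fin n) → ℝ)
    (x p : EuclideanSpace ℝ (Fin n)) : ℝ :=
  f x + (fconj f p).toReal - ⟪p, x⟫_ℝ

/-- `f` is `L`-smooth convex: convex, differentiable, with `L`-Lipschitz gradient. -/
def LSmoothConvex {n : ℕ} (L : ℝ) (f : EuclideanSpace ℝ (Fin n) → ℝ) : Prop :=
  ConvexOn ℝ Set.univ f ∧ Differentiable ℝ f ∧
    LipschitzWith (Real.toNNReal L) (fun x => gradient f x)

section Aux

open Set

variable {n : ℕ}
local notation "E" => EuclideanSpace ℝ (Fin n)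

lemma inner_grad_hasDerivAt (f : E → ℝ) (hd : Differentiable ℝ f) (a v : E) (t : ℝ) :
    HasDerivAt (fun s : ℝ => f (a + s • v)) ⟪gradient f (a + t • v), v⟫_ℝ t := by
  have h1 : HasFDerivAt f ((InnerProductSpace.toDual ℝ E) (gradient f (a + t • v))) (a + t • v) :=
    hasGradientAt_iff_hasFDerivAt.mp (hd _).hasGradientAt
  have h2 : HasDerivAt (fun s : ℝ => a + s • v) v t := by
    simpa using ((hasDerivAt_id t).smul_const v).const_add a
  have := h1.comp_hasDerivAt t h2
  simpa [InnerProductSpace.toDual_apply_apply, Function.comp_def] using this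

lemma gradA (f : E → ℝ) (hc : ConvexOn ℝ univ f) (hd : Differentiable ℝ f) (a b : E) :
    f a + ⟪gradient f a, b - a⟫_ℝ ≤ f b := by
  set v := b - a with hv
  have hg := inner_grad_hasDerivAt f hd a v
  have hconv : ConvexOn ℝ univ (fun s : ℝ => f (a + s • v)) := by
    have := hc.comp_affineMap (AffineMap.lineMap a b)
    have he : (fun s : ℝ => f (a + s • v)) = f ∘ (AffineMap.lineMap a b : ℝ →ᵃ[ℝ] E) := by
      funext s
      simp [AffineMap.lineMap_apply, hv, add_comm]
    rw [he]
    simpa using this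
  have h01 : (0:ℝ) < 1 := one_pos
  have hg0 := hg 0
  rw [zero_smul, add_zero] at hg0
  have := hconv.le_slope_of_hasDerivAt (mem_univ 0) (mem_univ 1) h01 hg0
  have hs : slope (fun s : ℝ => f (a + s • v)) 0 1 = f b - f a := by
    simp [slope_def_field, hv]
  rw [hs] at this
  linarith

lemma gradB {L : ℝ} (hL : 0 < L) (f : E → ℝ) (hd : Differentiable ℝ f)
    (hlip : LipschitzWith (Real.toNNReal L) (fun x => gradient f x)) (a b : E) :
    f b ≤ f a + ⟪gradient f a, b - a⟫_ℝ + L / 2 * ‖b - a‖ ^ 2 := by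
  set v := b - a with hv
  have hg := inner_grad_hasDerivAt f hd a v
  have hcg : Continuous fun y : E => gradient f y := hlip.continuous
  have hcont : Continuous fun t : ℝ => ⟪gradient f (a + t • v), v⟫_ℝ := by
    exact (hcg.comp (by continuity)).inner continuous_const
  have key : ∫ t in (0:ℝ)..1, ⟪gradient f (a + t • v), v⟫_ℝ
      = f (a + (1:ℝ) • v) - f (a + (0:ℝ) • v) := by
    exact intervalIntegral.integral_eq_sub_of_hasDerivAt (fun t _ => hg t)
      (hcont.intervalIntegrable 0 1)
  have hbound : ∀ t ∈ Icc (0:ℝ) 1,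
      ⟪gradient f (a + t • v), v⟫_ℝ ≤ ⟪gradient f a, v⟫_ℝ + L * ‖v‖ ^ 2 * t := by
    intro t ht
    have hdist : dist (gradient f (a + t • v)) (gradient f a) ≤ L * (t * ‖v‖) := by
      have := hlip.dist_le_mul (a + t • v) a
      have hd2 : dist (a + t • v) a = t * ‖v‖ := by
        simp [dist_eq_norm, norm_smul, abs_of_nonneg ht.1]
      rw [hd2] at this
      simpa [Real.coe_toNNReal L hL.le] using this
    have hcs : ⟪gradient f (a + t • v) - gradient f a, v⟫_ℝ
        ≤ ‖gradient f (a + t • v) - gradient f a‖ * ‖v‖ := real_inner_le_norm _ _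
    rw [inner_sub_left] at hcs
    have hnorm : ‖gradient f (a + t • v) - gradient f a‖ ≤ L * (t * ‖v‖) := by
      simpa [dist_eq_norm] using hdist
    have hvn : (0:ℝ) ≤ ‖v‖ := norm_nonneg _
    nlinarith [mul_le_mul_of_nonneg_right hnorm hvn]
  have hmono : ∫ t in (0:ℝ)..1, ⟪gradient f (a + t • v), v⟫_ℝ
      ≤ ∫ t in (0:ℝ)..1, (⟪gradient f a, v⟫_ℝ + L * ‖v‖ ^ 2 * t) := by
    apply intervalIntegral.integral_mono_on zero_le_one (hcont.intervalIntegrable 0 1)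
      ((continuous_const.add (continuous_const.mul continuous_id)).intervalIntegrable 0 1) hbound
  have hrhs : ∫ t in (0:ℝ)..1, (⟪gradient f a, v⟫_ℝ + L * ‖v‖ ^ 2 * t)
      = ⟪gradient f a, v⟫_ℝ + L / 2 * ‖v‖ ^ 2 := by
    have h1 : ∫ t in (0:ℝ)..1, (⟪gradient f a, v⟫_ℝ + L * ‖v‖ ^ 2 * t)
        = (∫ _t in (0:ℝ)..1, ⟪gradient f a, v⟫_ℝ) + ∫ t in (0:ℝ)..1, L * ‖v‖ ^ 2 * t := by
      apply intervalIntegral.integral_add (intervalIntegrable_const)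
      exact ((continuous_const.mul continuous_id).intervalIntegrable 0 1)
    rw [h1, intervalIntegral.integral_const_mul, integral_id]
    simp
    ring
  rw [key] at hmono
  rw [hrhs] at hmono
  have : a + (1:ℝ) • v = b := by simp [hv]
  rw [this] at hmono
  simp only [zero_smul, add_zero] at hmono
  linarith

lemma inner_diff (c : E) : Differentiable ℝ (fun z : E => ⟪c, z⟫_ℝ) :=
  (innerSL ℝ c).differentiable

lemma grad_sub_linear (f : E → ℝ) (hd : Differentiable ℝ f) (c y : E) :
    gradient (fun z : E => f z - ⟪c, z⟫_ℝ) y = gradient f y - c := by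
  have h1 : HasFDerivAt f ((InnerProductSpace.toDual ℝ E) (gradient f y)) y :=
    hasGradientAt_iff_hasFDerivAt.mp (hd _).hasGradientAt
  have h2 : HasFDerivAt (fun z : E => ⟪c, z⟫_ℝ) ((InnerProductSpace.toDual ℝ E) c) y := by
    have : ((InnerProductSpace.toDual ℝ E) c : E →L[ℝ] ℝ) = innerSL ℝ c := by
      ext z; simp [InnerProductSpace.toDual_apply_apply]
    rw [this]
    exact (innerSL ℝ c).hasFDerivAt
  have h3 : HasFDerivAt (fun z : E => f z - ⟪c, z⟫_ℝ)
      ((InnerProductSpace.toDual ℝ E) (gradient f y - c)) y := by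
    rw [map_sub]
    exact h1.sub h2
  exact (hasGradientAt_iff_hasFDerivAt.mpr h3).gradient

lemma interp {L : ℝ} (hL : 0 < L) (f : E → ℝ) (hc : ConvexOn ℝ univ f)
    (hd : Differentiable ℝ f)
    (hlip : LipschitzWith (Real.toNNReal L) (fun x => gradient f x)) (a b : E) :
    f a + ⟪gradient f a, b - a⟫_ℝ + 1 / (2 * L) * ‖gradient f b - gradient f a‖ ^ 2 ≤ f b := by
  set c := gradient f a with hc'
  set φ := fun z : E => f z - ⟪c, z⟫_ℝ with hφ
  have hφd : Differentiable ℝ φ := hd.sub (inner_diff c)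
  have hφgrad : ∀ y, gradient φ y = gradient f y - c := grad_sub_linear f hd c
  have hφconv : ConvexOn ℝ univ φ := by
    apply hc.sub
    refine ⟨convex_univ, fun x _ y _ s t hs ht hst => ?_⟩
    simp only [smul_eq_mul]
    rw [inner_add_right, real_inner_smul_right, real_inner_smul_right]
  have hφlip : LipschitzWith (Real.toNNReal L) (fun y => gradient φ y) := by
    apply LipschitzWith.of_dist_le_mul
    intro u w
    simp only [hφgrad]
    rw [dist_sub_right]
    exact hlip.dist_le_mul u w
  set w := gradient f b - c with hw
  set z := b - (1 / L) • w with hz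
  have h1 : φ a ≤ φ z := by
    have := gradA (n := n) φ hφconv hφd a z
    rw [hφgrad] at this
    simpa [hc'] using this
  have h2 : φ z ≤ φ b - 1 / (2 * L) * ‖w‖ ^ 2 := by
    have := gradB (n := n) hL φ hφd hφlip b z
    rw [hφgrad, hz] at this
    have e1 : b - (1 / L) • w - b = -((1 / L) • w) := by abel
    rw [e1] at this
    have e2 : ⟪gradient f b - c, -((1 / L) • w)⟫_ℝ = -(1 / L) * ‖w‖ ^ 2 := by
      rw [← hw, inner_neg_right, real_inner_smul_right, real_inner_self_eq_norm_sq]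
      ring
    have e3 : ‖-((1 / L) • w)‖ ^ 2 = (1 / L) ^ 2 * ‖w‖ ^ 2 := by
      rw [norm_neg, norm_smul, Real.norm_eq_abs,
        abs_of_pos (show (0:ℝ) < 1 / L by positivity), mul_pow]
    rw [e2, e3] at this
    have hLne : L ≠ 0 := ne_of_gt hL
    have : φ (b - (1 / L) • w) ≤ φ b - 1 / (2 * L) * ‖w‖ ^ 2 := by
      have expand : -(1 / L) * ‖w‖ ^ 2 + L / 2 * ((1 / L) ^ 2 * ‖w‖ ^ 2)
          = -(1 / (2 * L)) * ‖w‖ ^ 2 := by field_simp; ring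
      nlinarith [this]
    exact this
  have h3 : φ a ≤ φ b - 1 / (2 * L) * ‖w‖ ^ 2 := le_trans h1 h2
  have e4 : ⟪c, b⟫_ℝ - ⟪c, a⟫_ℝ = ⟪gradient f a, b - a⟫_ℝ := by
    rw [hc', inner_sub_right]
  simp only [hφ] at h3
  rw [hw, hc'] at *
  linarith [h3, e4]

lemma fconj_lt_top_of_bound (f : E → ℝ) (p : E) (C : ℝ)
    (h : ∀ y, ⟪p, y⟫_ℝ - f y ≤ C) : fconj f p < ⊤ := by
  have : fconj f p ≤ (C : EReal) := iSup_le fun y => EReal.coe_le_coe_iff.mpr (h y)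
  exact lt_of_le_of_lt this (EReal.coe_lt_top C)

lemma fenchel_young (f : E → ℝ) (p : E) (hp : p ∈ fconjDom f) (y : E) :
    ⟪p, y⟫_ℝ - f y ≤ (fconj f p).toReal := by
  have h1 : ((⟪p, y⟫_ℝ - f y : ℝ) : EReal) ≤ fconj f p := by
    unfold fconj
    exact le_iSup (fun z : E => ((⟪p, z⟫_ℝ - f z : ℝ) : EReal)) y
  have h2 : fconj f p ≤ ((fconj f p).toReal : EReal) := EReal.le_coe_toReal (ne_of_lt hp)
  exact EReal.coe_le_coe_iff.mp (le_trans h1 h2)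

lemma dualDiv_nonneg (f : E → ℝ) (x p : E) (hp : p ∈ fconjDom f) :
    0 ≤ dualDiv f x p := by
  have := fenchel_young f p hp x
  unfold dualDiv
  linarith

lemma grad_mem_dom (f : E → ℝ) (hc : ConvexOn ℝ univ f) (hd : Differentiable ℝ f) (y : E) :
    gradient f y ∈ fconjDom f := by
  apply fconj_lt_top_of_bound f _ (⟪gradient f y, y⟫_ℝ - f y)
  intro z
  have := gradA f hc hd y z
  rw [inner_sub_right] at this
  linarith

lemma dom_convex (f : E → ℝ) : Convex ℝ (fconjDom f) := by
  intro p hp q hq s t hs ht hst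
  apply fconj_lt_top_of_bound f _ (s * (fconj f p).toReal + t * (fconj f q).toReal)
  intro y
  have h1 := fenchel_young f p hp y
  have h2 := fenchel_young f q hq y
  have e : ⟪s • p + t • q, y⟫_ℝ = s * ⟪p, y⟫_ℝ + t * ⟪q, y⟫_ℝ := by
    rw [inner_add_left, real_inner_smul_left, real_inner_smul_left]
  rw [e]
  have hfy : s * f y + t * f y = f y := by rw [← add_mul, hst, one_mul]
  have g1 := mul_le_mul_of_nonneg_left h1 hs
  have g2 := mul_le_mul_of_nonneg_left h2 ht
  nlinarith [g1, g2]

lemma vi (f : E → ℝ) (pstar : E)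
    (hps : pstar ∈ closure (fconjDom f))
    (hmin : ∀ q ∈ closure (fconjDom f), ‖pstar‖ ≤ ‖q‖)
    (q : E) (hq : q ∈ closure (fconjDom f)) :
    ‖pstar‖ ^ 2 ≤ ⟪pstar, q⟫_ℝ := by
  have hconv : Convex ℝ (closure (fconjDom f)) := (dom_convex f).closure
  set c : ℝ := ⟪pstar, q - pstar⟫_ℝ with hc
  set d : ℝ := ‖q - pstar‖ ^ 2 with hd
  have hd0 : 0 ≤ d := by positivity
  have key : ∀ t : ℝ, 0 < t → t ≤ 1 → 0 ≤ 2 * c + t * d := by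
    intro t ht0 ht1
    have hmem : (1 - t) • pstar + t • q ∈ closure (fconjDom f) :=
      hconv hps hq (by linarith) (le_of_lt ht0) (by ring)
    have hle := hmin _ hmem
    have hsq : ‖pstar‖ ^ 2 ≤ ‖(1 - t) • pstar + t • q‖ ^ 2 := by
      apply pow_le_pow_left₀ (norm_nonneg _) hle
    have e1 : (1 - t) • pstar + t • q = pstar + t • (q - pstar) := by
      rw [smul_sub]; module
    rw [e1] at hsq
    have e2 : ‖pstar + t • (q - pstar)‖ ^ 2
        = ‖pstar‖ ^ 2 + 2 * (t * c) + t ^ 2 * d := by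
      rw [norm_add_sq_real, real_inner_smul_right, norm_smul, Real.norm_eq_abs,
        abs_of_pos ht0, mul_pow, hc, hd]
    rw [e2] at hsq
    nlinarith
  have hcn : 0 ≤ c := by
    rcases eq_or_lt_of_le hd0 with h0 | hdp
    · have := key 1 one_pos le_rfl
      rw [← h0] at this
      linarith
    · by_contra hcneg
      push_neg at hcneg
      have ht0 : 0 < min 1 (-c / d) := by
        exact lt_min one_pos (div_pos (by linarith) hdp)
      have := key _ ht0 (min_le_left _ _)
      have htd : min 1 (-c / d) * d ≤ -c := by
        rw [← le_div_iff₀ hdp]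
        exact min_le_right _ _
      linarith
  rw [hc, inner_sub_right] at hcn
  rw [← real_inner_self_eq_norm_sq]
  linarith

end Aux

set_option maxHeartbeats 2000000 in
/-- gradient descent with step size `1/L`; if `p⋆ ∈ dom f*` then
`‖∇f(x_k) − p⋆‖² ≤ ‖∇f(x_k)‖² − ‖p⋆‖² ≤ 2 L D_f(x₀,p⋆)/k` for all `k ≥ 1`. -/
theorem stmt3 {n : ℕ} (hn : 1 ≤ n) (L : ℝ) (hL : 0 < L)
    (f : EuclideanSpace ℝ (Fin n) → ℝ) (hf : LSmoothConvex L f)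
    (x₀ : EuclideanSpace ℝ (Fin n))
    (x : ℕ → EuclideanSpace ℝ (Fin n)) (hx0 : x 0 = x₀)
    (hstep : ∀ k, x (k + 1) = x k - (1 / L) • gradient f (x k))
    (pstar : EuclideanSpace ℝ (Fin n))
    (hps : pstar ∈ closure (fconjDom f))
    (hmin : ∀ q ∈ closure (fconjDom f), ‖pstar‖ ≤ ‖q‖)
    (hpd : pstar ∈ fconjDom f) :
    ∀ k : ℕ, 1 ≤ k →
      ‖gradient f (x k) - pstar‖ ^ 2 ≤ ‖gradient f (x k)‖ ^ 2 - ‖pstar‖ ^ 2 ∧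
      ‖gradient f (x k)‖ ^ 2 - ‖pstar‖ ^ 2 ≤ 2 * L * dualDiv f x₀ pstar / k := by
  obtain ⟨hc, hd, hlip⟩ := hf
  set g : ℕ → EuclideanSpace ℝ (Fin n) := fun k => gradient f (x k) with hg
  set P : ℝ := ‖pstar‖ ^ 2 with hP
  -- variational inequality for gradients
  have hvi : ∀ k : ℕ, P ≤ ⟪pstar, g k⟫_ℝ := by
    intro k
    exact vi f pstar hps hmin (g k) (subset_closure (grad_mem_dom f hc hd (x k)))
  -- per-step Lyapunov decrease
  have key : ∀ k : ℕ,
      2 * L * dualDiv f (x (k + 1)) pstar + ((k:ℝ) + 1) * (‖g (k + 1)‖ ^ 2 - P)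
      ≤ 2 * L * dualDiv f (x k) pstar + (k:ℝ) * (‖g k‖ ^ 2 - P) := by
    intro k
    set a := g k with ha
    set b := g (k + 1) with hb
    have hd1 : x k - x (k + 1) = (1 / L) • a := by
      rw [hstep k]; abel
    have hd2 : x (k + 1) - x k = -((1 / L) • a) := by
      rw [hstep k]; abel
    -- interpolation inequality, both directions
    have h2 := interp hL f hc hd hlip (x (k + 1)) (x k)
    rw [hd1] at h2
    have h3 := interp hL f hc hd hlip (x k) (x (k + 1))
    rw [hd2] at h3
    have e2 : ⟪gradient f (x (k + 1)), (1 / L) • a⟫_ℝ = (1 / L) * ⟪b, a⟫_ℝ := by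
      rw [real_inner_smul_right]
    have e3 : ⟪gradient f (x k), -((1 / L) • a)⟫_ℝ = -((1 / L) * ‖a‖ ^ 2) := by
      rw [inner_neg_right, real_inner_smul_right]
      have h5 : ⟪gradient f (x k), a⟫_ℝ = ‖a‖ ^ 2 := real_inner_self_eq_norm_sq a
      rw [h5]
    rw [e2] at h2
    rw [e3] at h3
    have hga : gradient f (x k) = a := rfl
    have hgb : gradient f (x (k + 1)) = b := rfl
    rw [hga, hgb] at h2 h3
    have hLne : L ≠ 0 := ne_of_gt hL
    have hsub : ‖b - a‖ ^ 2 = ‖a - b‖ ^ 2 := by rw [norm_sub_rev]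
    rw [hsub] at h3
    have eab : ‖a - b‖ ^ 2 = ‖a‖ ^ 2 - 2 * ⟪a, b⟫_ℝ + ‖b‖ ^ 2 := by
      rw [norm_sub_sq_real]
    have hcomm : ⟪b, a⟫_ℝ = ⟪a, b⟫_ℝ := real_inner_comm _ _
    -- cocoercivity consequence : ‖b‖^2 ≤ ⟪a, b⟫ and monotonicity of gradient norms
    have hq : 1 / L * (⟪b, a⟫_ℝ + ‖a - b‖ ^ 2 - ‖a‖ ^ 2) ≤ 0 := by
      have expand : 1 / L * (⟪b, a⟫_ℝ + ‖a - b‖ ^ 2 - ‖a‖ ^ 2)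
          = 1 / L * ⟪b, a⟫_ℝ + (1 / (2 * L) * ‖a - b‖ ^ 2 + 1 / (2 * L) * ‖a - b‖ ^ 2)
            - 1 / L * ‖a‖ ^ 2 := by
        field_simp
        ring
      rw [expand]
      linarith [h2, h3]
    have hq2 : ⟪b, a⟫_ℝ + ‖a - b‖ ^ 2 - ‖a‖ ^ 2 ≤ 0 := by
      have h := mul_le_mul_of_nonneg_left hq (le_of_lt hL)
      have e : L * (1 / L * (⟪b, a⟫_ℝ + ‖a - b‖ ^ 2 - ‖a‖ ^ 2))
          = ⟪b, a⟫_ℝ + ‖a - b‖ ^ 2 - ‖a‖ ^ 2 := by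
        field_simp
      rw [e] at h
      linarith
    have hbb : ‖b‖ ^ 2 ≤ ⟪a, b⟫_ℝ := by linarith [hq2, eab, hcomm]
    have hmono : ‖b‖ ^ 2 ≤ ‖a‖ ^ 2 := by
      nlinarith [hbb, real_inner_le_norm a b, sq_nonneg (‖a‖ - ‖b‖), norm_nonneg a, norm_nonneg b]
    -- energy decrease from h2 multiplied by 2L
    have h2' : 2 * ⟪b, a⟫_ℝ + ‖a - b‖ ^ 2 ≤ 2 * L * (f (x k) - f (x (k + 1))) := by
      have hstep1 : 1 / L * ⟪b, a⟫_ℝ + 1 / (2 * L) * ‖a - b‖ ^ 2 ≤ f (x k) - f (x (k + 1)) := by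
        linarith [h2]
      have h := mul_le_mul_of_nonneg_left hstep1 (by positivity : (0:ℝ) ≤ 2 * L)
      have e : 2 * L * (1 / L * ⟪b, a⟫_ℝ + 1 / (2 * L) * ‖a - b‖ ^ 2)
          = 2 * ⟪b, a⟫_ℝ + ‖a - b‖ ^ 2 := by
        field_simp
      rw [e] at h
      exact h
    -- dual divergence decrement
    have hinner : ⟪pstar, x k⟫_ℝ - ⟪pstar, x (k + 1)⟫_ℝ = (1 / L) * ⟪pstar, a⟫_ℝ := by
      rw [← inner_sub_right, hd1, real_inner_smul_right]
    have hDdiff : dualDiv f (x k) pstar - dualDiv f (x (k + 1)) pstar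
        = (f (x k) - f (x (k + 1))) - (1 / L) * ⟪pstar, a⟫_ℝ := by
      unfold dualDiv
      linarith [hinner]
    have hDdiff' : 2 * L * (dualDiv f (x k) pstar - dualDiv f (x (k + 1)) pstar)
        = 2 * L * (f (x k) - f (x (k + 1))) - 2 * ⟪pstar, a⟫_ℝ := by
      rw [hDdiff]
      field_simp
    -- final combination
    have eap : ‖a - pstar‖ ^ 2 = ‖a‖ ^ 2 - 2 * ⟪a, pstar⟫_ℝ + P := by
      rw [norm_sub_sq_real, hP]
    have hap0 : 0 ≤ ‖a - pstar‖ ^ 2 := by positivity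
    have hpcomm : ⟪pstar, a⟫_ℝ = ⟪a, pstar⟫_ℝ := real_inner_comm _ _
    have hk0 : (0:ℝ) ≤ (k:ℝ) := Nat.cast_nonneg k
    have hprod : 0 ≤ (k:ℝ) * (‖a‖ ^ 2 - ‖b‖ ^ 2) :=
      mul_nonneg hk0 (by linarith)
    linarith [h2', hDdiff', eab, eap, hap0, hcomm, hpcomm, hprod]
  -- telescoping
  have hΦ : ∀ k : ℕ,
      2 * L * dualDiv f (x k) pstar + (k:ℝ) * (‖g k‖ ^ 2 - P)
      ≤ 2 * L * dualDiv f (x 0) pstar := by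
    intro k
    induction k with
    | zero => simp
    | succ m ih =>
      have := key m
      push_cast at this ⊢
      linarith
  intro k hk
  have hk0 : (0:ℝ) < (k:ℝ) := by exact_mod_cast hk
  have hDk : 0 ≤ dualDiv f (x k) pstar := dualDiv_nonneg f (x k) pstar hpd
  have hD0 : dualDiv f (x 0) pstar = dualDiv f x₀ pstar := by rw [hx0]
  have h2L : (0:ℝ) < 2 * L := by positivity
  constructor
  · -- first inequality from VI
    have hv := hvi k
    have hgk : gradient f (x k) = g k := rfl
    rw [hgk]
    have e : ‖g k - pstar‖ ^ 2 = ‖g k‖ ^ 2 - 2 * ⟪g k, pstar⟫_ℝ + P := by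
      rw [norm_sub_sq_real, hP]
    rw [e]
    have hpcomm : ⟪pstar, g k⟫_ℝ = ⟪g k, pstar⟫_ℝ := real_inner_comm _ _
    rw [hpcomm] at hv
    linarith
  · -- second inequality from Lyapunov
    have hΦk := hΦ k
    rw [hD0] at hΦk
    have hgk : gradient f (x k) = g k := rfl
    rw [hgk, le_div_iff₀ hk0]
    linarith [hΦk, mul_nonneg (le_of_lt h2L) hDk]
end

section
/- Let Ψ* : ℝ^n → ℝ be L_{Ψ*}-smooth convex with biconjugate Ψ := (Ψ*)*, and let F : ℝ^n → ℝ be L_F-smooth convex. Let (X_k, θ_k) be the mirror descent iterates with initial point θ₀ ∈ ℝ^n and step sizes η_i > 0. Fix k ≥ 1 and assume η_i ≤ 1/(L_F · L_{Ψ*}) for all i ≤ k−1. Then for every w ∈ dom Ψ, F(X_k) − F(w) ≤ D_{Ψ*}(θ₀, w)/a_k. -/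
open scoped InnerProductSpace
open Filter Topology

section Aux
variable {E : Type*} [NormedAddCommGroup E] [InnerProductSpace ℝ E] [CompleteSpace E]

lemma line_hasDerivAt (f : E → ℝ) (hf : Differentiable ℝ f) (x v : E) (t : ℝ) :
    HasDerivAt (fun s : ℝ => f (x + s • v)) ⟪gradient f (x + t • v), v⟫_ℝ t := by
  have hγ : HasDerivAt (fun s : ℝ => x + s • v) v t := by
    simpa using ((hasDerivAt_id t).smul_const v).const_add x
  have hfd : HasFDerivAt f (InnerProductSpace.toDual ℝ E (gradient f (x + t • v))) (x + t • v) :=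
    (hf (x + t • v)).hasGradientAt.hasFDerivAt
  simpa [InnerProductSpace.toDual_apply_apply, Function.comp_def] using hfd.comp_hasDerivAt t hγ

lemma convex_grad_ineq (f : E → ℝ) (hc : ConvexOn ℝ Set.univ f) (hf : Differentiable ℝ f)
    (x y : E) : f x + ⟪gradient f x, y - x⟫_ℝ ≤ f y := by
  have hconv : ConvexOn ℝ Set.univ (fun s : ℝ => f (x + s • (y - x))) := by
    have h := hc.comp_affineMap (AffineMap.lineMap x y)
    have heq : (f ∘ (AffineMap.lineMap x y : ℝ →ᵃ[ℝ] E)) = fun s : ℝ => f (x + s • (y - x)) := by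
      funext s
      have : (AffineMap.lineMap x y : ℝ →ᵃ[ℝ] E) s = x + s • (y - x) := by
        simp only [AffineMap.lineMap_apply, vsub_eq_sub, vadd_eq_add]
        module
      simp [this]
    rw [heq] at h
    simpa using h
  have hder : HasDerivAt (fun s : ℝ => f (x + s • (y - x))) ⟪gradient f x, y - x⟫_ℝ 0 := by
    have := line_hasDerivAt f hf x (y - x) 0
    simpa using this
  have hslope := hconv.le_slope_of_hasDerivAt (Set.mem_univ 0) (Set.mem_univ 1) one_pos hder
  simp only [slope_def_field] at hslope
  have h0 : x + (0:ℝ) • (y - x) = x := by module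
  have h1 : x + (1:ℝ) • (y - x) = y := by module
  rw [h0, h1] at hslope
  have : ⟪gradient f x, y - x⟫_ℝ ≤ f y - f x := by
    simpa using hslope
  linarith

lemma descent_lemma (f : E → ℝ) (L : ℝ) (hL : 0 ≤ L) (hf : Differentiable ℝ f)
    (hlip : LipschitzWith (Real.toNNReal L) (fun z => gradient f z)) (x y : E) :
    f y ≤ f x + ⟪gradient f x, y - x⟫_ℝ + L / 2 * ‖y - x‖ ^ 2 := by
  set v := y - x with hv
  set ψ : ℝ → ℝ := fun t => ⟪gradient f (x + t • v), v⟫_ℝ with hψ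
  have hcont : Continuous ψ := by
    apply Continuous.inner
    · exact hlip.continuous.comp (by continuity)
    · exact continuous_const
  have hftc : ∫ t in (0:ℝ)..1, ψ t = f (x + (1:ℝ) • v) - f (x + (0:ℝ) • v) :=
    intervalIntegral.integral_eq_sub_of_hasDerivAt
      (fun t _ => line_hasDerivAt f hf x v t) (hcont.intervalIntegrable 0 1)
  have hbound : ∀ t ∈ Set.Icc (0:ℝ) 1, ψ t ≤ ψ 0 + L * ‖v‖ ^ 2 * t := by
    intro t ht
    have h1 : ψ t - ψ 0 = ⟪gradient f (x + t • v) - gradient f (x + (0:ℝ) • v), v⟫_ℝ := by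
      simp [hψ, inner_sub_left]
    have h2 := real_inner_le_norm (gradient f (x + t • v) - gradient f (x + (0:ℝ) • v)) v
    have h3 : ‖gradient f (x + t • v) - gradient f (x + (0:ℝ) • v)‖ ≤ L * (t * ‖v‖) := by
      have hd := hlip.dist_le_mul (x + t • v) (x + (0:ℝ) • v)
      rw [dist_eq_norm, dist_eq_norm] at hd
      have he : (x + t • v) - (x + (0:ℝ) • v) = t • v := by module
      rw [he, norm_smul] at hd
      rw [Real.norm_eq_abs, abs_of_nonneg ht.1] at hd
      calc ‖gradient f (x + t • v) - gradient f (x + (0:ℝ) • v)‖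
          ≤ (Real.toNNReal L : ℝ) * (t * ‖v‖) := hd
        _ ≤ L * (t * ‖v‖) := by
            have : (Real.toNNReal L : ℝ) = L := Real.coe_toNNReal L hL
            rw [this]
    have h4 : ψ t - ψ 0 ≤ L * (t * ‖v‖) * ‖v‖ := by
      rw [h1]
      exact h2.trans (by nlinarith [norm_nonneg v, norm_nonneg (gradient f (x + t • v) - gradient f (x + (0:ℝ) • v)), ht.1])
    nlinarith [norm_nonneg v]
  have hint2 : IntervalIntegrable (fun t => ψ 0 + L * ‖v‖ ^ 2 * t) MeasureTheory.volume 0 1 :=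
    (by continuity : Continuous fun t : ℝ => ψ 0 + L * ‖v‖ ^ 2 * t).intervalIntegrable 0 1
  have hmono := intervalIntegral.integral_mono_on (by norm_num : (0:ℝ) ≤ 1)
    (hcont.intervalIntegrable 0 1) hint2 hbound
  have hrhs : ∫ t in (0:ℝ)..1, (ψ 0 + L * ‖v‖ ^ 2 * t) = ψ 0 + L * ‖v‖ ^ 2 / 2 := by
    rw [intervalIntegral.integral_add (f := fun _ => ψ 0) (g := fun t => L * ‖v‖ ^ 2 * t) (intervalIntegrable_const)
      ((continuous_const.mul continuous_id : Continuous fun t : ℝ => L * ‖v‖ ^ 2 * t).intervalIntegrable 0 1),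
      intervalIntegral.integral_const, intervalIntegral.integral_const_mul, integral_id]
    norm_num
    ring
  have h0 : x + (0:ℝ) • v = x := by module
  have h1 : x + (1:ℝ) • v = y := by rw [hv]; module
  have hψ0 : ψ 0 = ⟪gradient f x, y - x⟫_ℝ := by rw [hψ]; simp [h0]; rw [← map_sub]
  rw [hrhs] at hmono
  rw [hftc, h0, h1, hψ0] at hmono
  linarith [hmono]

lemma lower_quadratic (f : E → ℝ) (L : ℝ) (hL : 0 < L) (hc : ConvexOn ℝ Set.univ f)
    (hf : Differentiable ℝ f) (hlip : LipschitzWith (Real.toNNReal L) (fun z => gradient f z))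
    (x y : E) :
    f x + ⟪gradient f x, y - x⟫_ℝ + 1 / (2 * L) * ‖gradient f y - gradient f x‖ ^ 2 ≤ f y := by
  set c := gradient f x with hc'
  set g : E → ℝ := fun z => f z - ⟪c, z⟫_ℝ with hg
  have hg_grad : ∀ z, HasGradientAt g (gradient f z - c) z := by
    intro z
    have h1 : HasFDerivAt f (InnerProductSpace.toDual ℝ E (gradient f z)) z :=
      (hf z).hasGradientAt.hasFDerivAt
    have h2 : HasFDerivAt (fun u : E => ⟪c, u⟫_ℝ) (InnerProductSpace.toDual ℝ E c) z := by
      have := (InnerProductSpace.toDual ℝ E c).hasFDerivAt (x := z)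
      have hfun : ⇑(InnerProductSpace.toDual ℝ E c) = fun u : E => ⟪c, u⟫_ℝ :=
        funext fun u => InnerProductSpace.toDual_apply_apply
      rw [hfun] at this
      exact this
    have h3 := h1.sub h2
    rw [hasGradientAt_iff_hasFDerivAt, map_sub]
    exact h3
  have hg_diff : Differentiable ℝ g := fun z => (hg_grad z).differentiableAt
  have hg_gradeq : ∀ z, gradient g z = gradient f z - c := fun z => (hg_grad z).gradient
  have hg_conv : ConvexOn ℝ Set.univ g := by
    have hlin : ConvexOn ℝ Set.univ (fun u : E => ⟪-c, u⟫_ℝ) := by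
      have := (innerSL ℝ (-c)).toLinearMap.convexOn convex_univ
      exact this
    have := hc.add hlin
    have heq : (f + fun u : E => ⟪-c, u⟫_ℝ) = g := by
      funext u; simp [hg, inner_neg_left]; ring
    rwa [heq] at this
  have hg_lip : LipschitzWith (Real.toNNReal L) (fun z => gradient g z) := by
    apply LipschitzWith.of_dist_le_mul
    intro a b
    rw [hg_gradeq a, hg_gradeq b, dist_sub_right]
    exact hlip.dist_le_mul a b
  have hmin : ∀ z, g x ≤ g z := by
    intro z
    have := convex_grad_ineq g hg_conv hg_diff x z
    rw [hg_gradeq x] at this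
    simpa [hc'] using this
  set u := gradient f y - c with hu
  have hdesc := descent_lemma g L hL.le hg_diff hg_lip y (y - L⁻¹ • u)
  rw [hg_gradeq y, ← hu] at hdesc
  have he1 : y - L⁻¹ • u - y = -(L⁻¹ • u) := by module
  rw [he1] at hdesc
  have he2 : ⟪u, -(L⁻¹ • u)⟫_ℝ = -(L⁻¹ * ‖u‖ ^ 2) := by
    rw [inner_neg_right, real_inner_smul_right, real_inner_self_eq_norm_sq]
  have he3 : ‖-(L⁻¹ • u)‖ ^ 2 = L⁻¹ ^ 2 * ‖u‖ ^ 2 := by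
    rw [norm_neg, norm_smul, Real.norm_eq_abs, abs_of_nonneg (inv_nonneg.mpr hL.le)]; ring
  rw [he2, he3] at hdesc
  have hkey : g x ≤ g y - 1 / (2 * L) * ‖u‖ ^ 2 := by
    calc g x ≤ g (y - L⁻¹ • u) := hmin _
      _ ≤ g y + -(L⁻¹ * ‖u‖ ^ 2) + L / 2 * (L⁻¹ ^ 2 * ‖u‖ ^ 2) := hdesc
      _ = g y - 1 / (2 * L) * ‖u‖ ^ 2 := by field_simp; ring
  have hgx : g x = f x - ⟪c, x⟫_ℝ := rfl
  have hgy : g y = f y - ⟪c, y⟫_ℝ := rfl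
  have hinner : ⟪c, y - x⟫_ℝ = ⟪c, y⟫_ℝ - ⟪c, x⟫_ℝ := inner_sub_right c y x
  rw [hgx, hgy] at hkey
  linarith

lemma cocoercive (f : E → ℝ) (L : ℝ) (hL : 0 < L) (hc : ConvexOn ℝ Set.univ f)
    (hf : Differentiable ℝ f) (hlip : LipschitzWith (Real.toNNReal L) (fun z => gradient f z))
    (x y : E) :
    1 / L * ‖gradient f y - gradient f x‖ ^ 2 ≤ ⟪gradient f y - gradient f x, y - x⟫_ℝ := by
  have h1 := lower_quadratic f L hL hc hf hlip x y
  have h2 := lower_quadratic f L hL hc hf hlip y x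
  have hns : ‖gradient f x - gradient f y‖ = ‖gradient f y - gradient f x‖ := norm_sub_rev _ _
  rw [hns] at h2
  have hi1 : ⟪gradient f y - gradient f x, y - x⟫_ℝ
      = ⟪gradient f y, y - x⟫_ℝ - ⟪gradient f x, y - x⟫_ℝ := inner_sub_left _ _ _
  have hi2 : ⟪gradient f y, x - y⟫_ℝ = -⟪gradient f y, y - x⟫_ℝ := by
    rw [← inner_neg_right]; congr 1; module
  rw [hi2] at h2
  have h3 : (2 : ℝ) * (1 / (2 * L)) = 1 / L := by field_simp
  rw [hi1]
  nlinarith [h1, h2, h3]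

end Aux

lemma fenchel_young_s7 {n : ℕ} (Ψstar : EuclideanSpace ℝ (Fin n) → ℝ)
    (w : EuclideanSpace ℝ (Fin n)) (hw : w ∈ fconjDom Ψstar) (θ : EuclideanSpace ℝ (Fin n)) :
    ⟪w, θ⟫_ℝ - Ψstar θ ≤ (fconj Ψstar w).toReal := by
  have hle : ((⟪w, θ⟫_ℝ - Ψstar θ : ℝ) : EReal) ≤ fconj Ψstar w :=
    le_iSup (fun x : EuclideanSpace ℝ (Fin n) => ((⟪w, x⟫_ℝ - Ψstar x : ℝ) : EReal)) θ
  have hne_top : fconj Ψstar w ≠ ⊤ := hw.ne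
  have hne_bot : fconj Ψstar w ≠ ⊥ := ((EReal.bot_lt_coe _).trans_le hle).ne'
  rw [← EReal.coe_toReal hne_top hne_bot] at hle
  exact_mod_cast hle

/-- mirror descent `X_k = ∇Ψ*(θ_k)`, `θ_{k+1} = θ_k − η_k ∇F(X_k)`.
Here `Ψ := (Ψ*)* = fconj Ψstar` (as `Ψ*` is finite-valued), so `dom Ψ = fconjDom Ψstar`, and
`D_{Ψ*}(θ, w) = Ψ*(θ) + Ψ(w) − ⟨θ, w⟩ = dualDiv Ψstar θ w`.  Under `η_i ≤ 1/(L_F L_{Ψ*})`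
for `i < k`, for every `w ∈ dom Ψ`: `F(X_k) − F(w) ≤ D_{Ψ*}(θ₀, w)/a_k`. -/
theorem stmt7 {n : ℕ} (hn : 1 ≤ n) (LΨ LF : ℝ) (hLΨ : 0 < LΨ) (hLF : 0 < LF)
    (Ψstar F : EuclideanSpace ℝ (Fin n) → ℝ)
    (hΨ : LSmoothConvex LΨ Ψstar) (hF : LSmoothConvex LF F)
    (θ₀ : EuclideanSpace ℝ (Fin n)) (η : ℕ → ℝ) (hη : ∀ i, 0 < η i)
    (θ : ℕ → EuclideanSpace ℝ (Fin n)) (hθ0 : θ 0 = θ₀)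
    (hstep : ∀ k, θ (k + 1) = θ k - η k • gradient F (gradient Ψstar (θ k)))
    (k : ℕ) (hk : 1 ≤ k) (hηb : ∀ i < k, η i ≤ 1 / (LF * LΨ))
    (w : EuclideanSpace ℝ (Fin n)) (hw : w ∈ fconjDom Ψstar) :
    F (gradient Ψstar (θ k)) - F w ≤
      dualDiv Ψstar θ₀ w / (∑ i ∈ Finset.range k, η i) := by
  obtain ⟨hΨc, hΨd, hΨl⟩ := hΨ
  obtain ⟨hFc, hFd, hFl⟩ := hF
  set X : ℕ → EuclideanSpace ℝ (Fin n) := fun i => gradient Ψstar (θ i) with hX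
  set g : ℕ → EuclideanSpace ℝ (Fin n) := fun i => gradient F (X i) with hg
  set Ψw : ℝ := (fconj Ψstar w).toReal with hΨw
  set D : ℕ → ℝ := fun i => Ψstar (θ i) + Ψw - ⟪w, θ i⟫_ℝ with hD
  have hθd : ∀ i, θ (i+1) - θ i = -(η i • g i) := by
    intro i; rw [hstep i]; module
  have hθd' : ∀ i, θ i - θ (i+1) = η i • g i := by
    intro i; rw [hstep i]; module
  have hNnn : ∀ i, (0:ℝ) ≤ ‖X (i+1) - X i‖ ^ 2 := fun i => sq_nonneg _
  -- step-size bound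
  have hA : ∀ i < k, η i * LF ≤ 1 / LΨ := by
    intro i hi
    have h := hηb i hi
    have hpos : (0:ℝ) < LF * LΨ := by positivity
    rw [le_div_iff₀ hLΨ]
    calc η i * LF * LΨ = η i * (LF * LΨ) := by ring
      _ ≤ 1 / (LF * LΨ) * (LF * LΨ) := mul_le_mul_of_nonneg_right h hpos.le
      _ = 1 := by field_simp
  -- cocoercivity of ∇Ψ*
  have hco : ∀ i, 1 / LΨ * ‖X (i+1) - X i‖ ^ 2 ≤ -(η i * ⟪X (i+1) - X i, g i⟫_ℝ) := by
    intro i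
    have h := cocoercive Ψstar LΨ hLΨ hΨc hΨd hΨl (θ i) (θ (i+1))
    rw [hθd i, inner_neg_right, real_inner_smul_right] at h
    exact h
  -- descent lemma for F along the iterates
  have hdF : ∀ i, F (X (i+1)) ≤ F (X i) + ⟪g i, X (i+1) - X i⟫_ℝ + LF / 2 * ‖X (i+1) - X i‖ ^ 2 :=
    fun i => descent_lemma F LF hLF.le hFd hFl (X i) (X (i+1))
  -- monotone decrease of F (X i)
  have hdec : ∀ i < k, F (X (i+1)) ≤ F (X i) := by
    intro i hi
    have h1 := hco i
    have h2 := hdF i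
    have h3 := hA i hi
    have hcm : ⟪g i, X (i+1) - X i⟫_ℝ = ⟪X (i+1) - X i, g i⟫_ℝ := real_inner_comm _ _
    rw [hcm] at h2
    have h4 := mul_le_mul_of_nonneg_left h2 (hη i).le
    have h5 := mul_le_mul_of_nonneg_right h3 (hNnn i)
    have h6 : 0 < 1 / LΨ := by positivity
    nlinarith [hNnn i, hη i, h4, h5, h1, h6]
  -- chain: F (X b) ≤ F (X a) for a ≤ b ≤ k
  have hchain : ∀ a b : ℕ, a ≤ b → b ≤ k → F (X b) ≤ F (X a) := by
    intro a b hab hbk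
    induction b with
    | zero => interval_cases a; exact le_refl _
    | succ b ih =>
      rcases Nat.eq_or_lt_of_le hab with h | h
      · rw [h]
      · have h1 : a ≤ b := by omega
        have h2 := ih h1 (by omega)
        have h3 := hdec b (by omega)
        linarith
  -- lower quadratic bound for Ψ*
  have hlow : ∀ i, Ψstar (θ (i+1)) + η i * ⟪X (i+1), g i⟫_ℝ
      + 1 / (2 * LΨ) * ‖X (i+1) - X i‖ ^ 2 ≤ Ψstar (θ i) := by
    intro i
    have h := lower_quadratic Ψstar LΨ hLΨ hΨc hΨd hΨl (θ (i+1)) (θ i)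
    rw [hθd' i, real_inner_smul_right] at h
    have e2 : ‖gradient Ψstar (θ i) - gradient Ψstar (θ (i+1))‖ = ‖X (i+1) - X i‖ :=
      norm_sub_rev _ _
    rw [e2] at h
    exact h
  -- one-step inequality for the dual divergence
  have hDstep : ∀ i < k, D (i+1) + η i * (F (X (i+1)) - F w) ≤ D i := by
    intro i hi
    have hlo := hlow i
    have hwv : ⟪w, θ (i+1)⟫_ℝ - ⟪w, θ i⟫_ℝ = -(η i * ⟪g i, w⟫_ℝ) := by
      rw [← inner_sub_right, hθd i, inner_neg_right, real_inner_smul_right, real_inner_comm]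
    have hb1 : F (X (i+1)) - F w - LF / 2 * ‖X (i+1) - X i‖ ^ 2
        ≤ ⟪X (i+1), g i⟫_ℝ - ⟪g i, w⟫_ℝ := by
      have hc1 := convex_grad_ineq F hFc hFd (X i) w
      have hc2 := hdF i
      have e1 : ⟪g i, w - X i⟫_ℝ = ⟪g i, w⟫_ℝ - ⟪g i, X i⟫_ℝ := inner_sub_right _ _ _
      have e2 : ⟪g i, X (i+1) - X i⟫_ℝ = ⟪g i, X (i+1)⟫_ℝ - ⟪g i, X i⟫_ℝ := inner_sub_right _ _ _
      have e3 : ⟪X (i+1), g i⟫_ℝ = ⟪g i, X (i+1)⟫_ℝ := real_inner_comm _ _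
      rw [e1] at hc1
      rw [e2] at hc2
      rw [e3]
      linarith
    have hb2 := mul_le_mul_of_nonneg_left hb1 (hη i).le
    have hb3 := mul_le_mul_of_nonneg_right (hA i hi) (hNnn i)
    have heq : 1 / (2 * LΨ) * ‖X (i+1) - X i‖ ^ 2 = 1 / LΨ * ‖X (i+1) - X i‖ ^ 2 / 2 := by
      ring
    simp only [hD]
    linarith [hlo, hwv, hb2, hb3, heq]
  -- summation
  have hsum : ∀ m, m ≤ k → D m + (∑ i ∈ Finset.range m, η i) * (F (X k) - F w) ≤ D 0 := by
    intro m
    induction m with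
    | zero => intro _; simp
    | succ m ih =>
      intro hmk
      have hm : m < k := hmk
      have h1 := hDstep m hm
      have h2 : F (X k) ≤ F (X (m+1)) := hchain (m+1) k hmk le_rfl
      have h3 : η m * (F (X k) - F w) ≤ η m * (F (X (m+1)) - F w) :=
        mul_le_mul_of_nonneg_left (by linarith) (hη m).le
      have h4 := ih (le_of_lt hm)
      rw [Finset.sum_range_succ, add_mul]
      linarith
  -- nonnegativity of D k
  have hDk : 0 ≤ D k := by
    have := fenchel_young_s7 Ψstar w hw (θ k)
    simp only [hD]
    linarith [this]
  -- conclusion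
  have hS : 0 < ∑ i ∈ Finset.range k, η i :=
    Finset.sum_pos (fun i _ => hη i) (Finset.nonempty_range_iff.mpr (by omega))
  have hfinal := hsum k le_rfl
  have hdd : dualDiv Ψstar θ₀ w = D 0 := by
    simp only [dualDiv, hD, hθ0, hΨw]
  rw [hdd, le_div_iff₀ hS]
  nlinarith [hfinal, hDk]
end
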